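/- arXiv:0705.3190 — 8 statements merged into one kernel-verified Lean document; each statement's English description precedes it below -/
import Mathlib

section
/- Let (M, C, T_l, T_r, Π, t, i) be an admissible septuple and let w : T_r X → T_l X be a transposition morphism for an object X of M. Then the operators w_n := Π(T_l^n w) ∘ (t_n)_X ∘ i_{T_l^n X} : Z^n → Z^n make the cosimplicial object Z^n := Π(T_l^{n+1} X) para-cocyclic; explicitly, for every n and every 1 ≤ k ≤ n one has: w_n ∘ d_0 = d_n, w_n ∘ d_k = d_{k-1} ∘ w_{n-1}, w_n ∘ s_0 = s_n ∘ w_{n+1} ∘ w_{n+1}, and w_n ∘ s_k = s_{k-1} ∘ w_{n+1}. -/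
/-!
Write `L_n := T_l^n(w) ∘ (t_n)_X : T_r T_l^n X ⟶ T_l^{n+1} X`, so that `L_0 = w`,
`L_{n+1} = T_l(L_n) ∘ t` and `w_n = Π(L_n) ∘ i`. Naturality of `i` turns the relations for
`d_{k+1}`, `s_{k+1}` into `L_{n+1} ∘ T_r(d_k) = d_k ∘ L_n` and `L_{n+1} ∘ T_r(s_k) = s_k ∘ L_{n+2}`,
and the admissibility axioms turn those for `d_0`, `s_0` into `L_n ∘ u_r = d_n` and
`L_n ∘ m_r = s_n ∘ L_{n+1} ∘ T_r(L_n)`. Each of these is proved by induction, pushing it through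
`L ↦ T_l(L) ∘ t` with naturality of `t` and one axiom of the distributive law; the induction
starts from the transposition axioms for `w = L_0`, or at `k = 0` from the compatibility of `t`
with `u_l` and `m_l`.
-/

open CategoryTheory

universe v u v' u'

namespace Stmt0

variable {M : Type u} [Category.{v} M]

/-- `fpow T n X` is the `n`-fold application `Tⁿ X`. -/
def fpow (T : M ⥤ M) : ℕ → M → M
  | 0, X => X
  | n + 1, X => T.obj (fpow T n X)

/-- `coface T u X n k` represents the coface `d_k = Tᵏ (u_{T^{n-k} X}) : Tⁿ X ⟶ Tⁿ⁺¹ X`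
(meaningful for `k ≤ n`). -/
def coface (T : M ⥤ M) (u : 𝟭 M ⟶ T) (X : M) : (n k : ℕ) → (fpow T n X ⟶ fpow T (n + 1) X)
  | n, 0 => u.app (fpow T n X)
  | n + 1, k + 1 => T.map (coface T u X n k)
  | 0, _ + 1 => u.app X

/-- `codeg T m X n k` represents the codegeneracy `s_k = Tᵏ (m_{T^{n-k} X}) : Tⁿ⁺² X ⟶ Tⁿ⁺¹ X`
(meaningful for `k ≤ n`). -/
def codeg (T : M ⥤ M) (m : T ⋙ T ⟶ T) (X : M) : (n k : ℕ) → (fpow T (n + 2) X ⟶ fpow T (n + 1) X)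
  | n, 0 => m.app (fpow T n X)
  | n + 1, k + 1 => T.map (codeg T m X n k)
  | 0, _ + 1 => m.app X

/-- The lifted distributive law
`t_n = T_l^{n-1} t ∘ ⋯ ∘ t T_l^{n-1} : T_r T_l^n X ⟶ T_l^n T_r X`. -/
def distIter (Tl Tr : M ⥤ M) (t : Tl ⋙ Tr ⟶ Tr ⋙ Tl) (X : M) :
    (n : ℕ) → (Tr.obj (fpow Tl n X) ⟶ fpow Tl n (Tr.obj X))
  | 0 => 𝟙 (Tr.obj X)
  | n + 1 => t.app (fpow Tl n X) ≫ Tl.map (distIter Tl Tr t X n)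

/-- `T_l^n w : T_l^n Y ⟶ T_l^{n+1} X` for `w : Y ⟶ T_l X`. -/
def transIter (T : M ⥤ M) {X Y : M} (w : Y ⟶ T.obj X) : (n : ℕ) → (fpow T n Y ⟶ fpow T (n + 1) X)
  | 0 => w
  | n + 1 => T.map (transIter T w n)

variable {C : Type u'} [Category.{v'} C]

/-- The para-cocyclic operator `w_n := Π(T_l^n w) ∘ (t_n)_X ∘ i_{T_l^n X}`. -/
def paraOp (Tl Tr : M ⥤ M) (t : Tl ⋙ Tr ⟶ Tr ⋙ Tl) (P : M ⥤ C) (i : Tl ⋙ P ⟶ Tr ⋙ P)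
    {X : M} (w : Tr.obj X ⟶ Tl.obj X) (n : ℕ) :
    P.obj (fpow Tl (n + 1) X) ⟶ P.obj (fpow Tl (n + 1) X) :=
  i.app (fpow Tl n X) ≫ P.map (distIter Tl Tr t X n ≫ transIter Tl w n)

lemma map_map_comp_app_comp_map {N D : Type*} [Category N] [Category D] {L R : M ⥤ N}
    {G H : N ⥤ D} (α : L ⋙ G ⟶ R ⋙ H) {Y Y' : M} {Z Z' : N} {a : Y ⟶ Y'} {b : Z ⟶ Z'}
    {f : R.obj Y ⟶ Z} {f' : R.obj Y' ⟶ Z'} (h : R.map a ≫ f' = f ≫ b) :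
    G.map (L.map a) ≫ α.app Y' ≫ H.map f' = (α.app Y ≫ H.map f) ≫ H.map b := by
  have hα := α.naturality a
  simp only [Functor.comp_map] at hα
  rw [reassoc_of% hα, ← H.map_comp, h, H.map_comp, Category.assoc]

lemma coface_zero (T : M ⥤ M) (u : 𝟭 M ⟶ T) (X : M) (n : ℕ) :
    coface T u X n 0 = u.app (fpow T n X) := by
  cases n <;> rfl

lemma codeg_zero (T : M ⥤ M) (m : T ⋙ T ⟶ T) (X : M) (n : ℕ) :
    codeg T m X n 0 = m.app (fpow T n X) := by
  cases n <;> rfl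

section Transposition

variable {Tl Tr : M ⥤ M} (t : Tl ⋙ Tr ⟶ Tr ⋙ Tl)

lemma ur_app_comp_app_comp_map {ur : 𝟭 M ⟶ Tr}
    (ht₃ : ∀ Y : M, ur.app (Tl.obj Y) ≫ t.app Y = Tl.map (ur.app Y))
    {Y Z : M} {f : Tr.obj Y ⟶ Z} {g : Y ⟶ Z} (h : ur.app Y ≫ f = g) :
    ur.app (Tl.obj Y) ≫ t.app Y ≫ Tl.map f = Tl.map g := by
  rw [reassoc_of% ht₃, ← Tl.map_comp, h]

lemma map_ul_app_comp_app_comp_map {ul : 𝟭 M ⟶ Tl}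
    (ht₄ : ∀ Y : M, Tr.map (ul.app Y) ≫ t.app Y = ul.app (Tr.obj Y))
    {Y Z : M} (f : Tr.obj Y ⟶ Z) :
    Tr.map (ul.app Y) ≫ t.app Y ≫ Tl.map f = f ≫ ul.app Z := by
  simp only [Functor.id_obj, Functor.comp_obj, reassoc_of% ht₄]
  exact (ul.naturality f).symm

lemma map_ml_app_comp_app_comp_map {ml : Tl ⋙ Tl ⟶ Tl}
    (ht₂ : ∀ Y : M, Tr.map (ml.app Y) ≫ t.app Y =
      t.app (Tl.obj Y) ≫ Tl.map (t.app Y) ≫ ml.app (Tr.obj Y))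
    {Y Z : M} (f : Tr.obj Y ⟶ Z) :
    Tr.map (ml.app Y) ≫ t.app Y ≫ Tl.map f =
      (t.app (Tl.obj Y) ≫ Tl.map (t.app Y ≫ Tl.map f)) ≫ ml.app Z := by
  rw [reassoc_of% ht₂]
  simp [← ml.naturality]

lemma mr_app_comp_app_comp_map {mr : Tr ⋙ Tr ⟶ Tr}
    (ht₁ : ∀ Y : M, mr.app (Tl.obj Y) ≫ t.app Y =
      Tr.map (t.app Y) ≫ t.app (Tr.obj Y) ≫ Tl.map (mr.app Y))
    {Y Z W : M} {f : Tr.obj Y ⟶ Z} {g : Tr.obj Z ⟶ W} {s : W ⟶ Z}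
    (h : mr.app Y ≫ f = Tr.map f ≫ g ≫ s) :
    mr.app (Tl.obj Y) ≫ t.app Y ≫ Tl.map f =
      Tr.map (t.app Y ≫ Tl.map f) ≫ (t.app Z ≫ Tl.map g) ≫ Tl.map s := by
  rw [reassoc_of% ht₁, ← Tl.map_comp, h]
  have hnat := t.naturality f
  simp only [Functor.comp_map] at hnat
  simp [reassoc_of% hnat]

variable {X : M} (w : Tr.obj X ⟶ Tl.obj X)

def liftTransposition : (n : ℕ) → Tr.obj (fpow Tl n X) ⟶ fpow Tl (n + 1) X
  | 0 => w
  | n + 1 => t.app (fpow Tl n X) ≫ Tl.map (liftTransposition n)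

lemma distIter_comp_transIter (n : ℕ) :
    distIter Tl Tr t X n ≫ transIter Tl w n = liftTransposition t w n := by
  induction n with
  | zero => exact Category.id_comp w
  | succ n ih =>
    change (_ ≫ _) ≫ _ = _ ≫ Tl.map _
    rw [← ih, Tl.map_comp]
    exact Category.assoc _ _ _

lemma ur_app_comp_liftTransposition {ul : 𝟭 M ⟶ Tl} {ur : 𝟭 M ⟶ Tr}
    (ht₃ : ∀ Y : M, ur.app (Tl.obj Y) ≫ t.app Y = Tl.map (ur.app Y))
    (hw₁ : ur.app X ≫ w = ul.app X) :
    ∀ n : ℕ, ur.app (fpow Tl n X) ≫ liftTransposition t w n = coface Tl ul X n n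
  | 0 => hw₁
  | n + 1 => ur_app_comp_app_comp_map t ht₃ (ur_app_comp_liftTransposition ht₃ hw₁ n)

lemma map_coface_comp_liftTransposition {ul : 𝟭 M ⟶ Tl}
    (ht₄ : ∀ Y : M, Tr.map (ul.app Y) ≫ t.app Y = ul.app (Tr.obj Y)) :
    ∀ n k : ℕ, k ≤ n → Tr.map (coface Tl ul X n k) ≫ liftTransposition t w (n + 1) =
      liftTransposition t w n ≫ coface Tl ul X (n + 1) k
  | n, 0, _ => by
    rw [coface_zero, coface_zero]
    exact map_ul_app_comp_app_comp_map t ht₄ _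
  | n + 1, k + 1, hk =>
    map_map_comp_app_comp_map t (map_coface_comp_liftTransposition ht₄ n k (by omega))

lemma map_codeg_comp_liftTransposition {ml : Tl ⋙ Tl ⟶ Tl}
    (ht₂ : ∀ Y : M, Tr.map (ml.app Y) ≫ t.app Y =
      t.app (Tl.obj Y) ≫ Tl.map (t.app Y) ≫ ml.app (Tr.obj Y)) :
    ∀ n k : ℕ, k ≤ n → Tr.map (codeg Tl ml X n k) ≫ liftTransposition t w (n + 1) =
      liftTransposition t w (n + 2) ≫ codeg Tl ml X (n + 1) k
  | n, 0, _ => by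
    rw [codeg_zero, codeg_zero]
    exact map_ml_app_comp_app_comp_map t ht₂ _
  | n + 1, k + 1, hk =>
    map_map_comp_app_comp_map t (map_codeg_comp_liftTransposition ht₂ n k (by omega))

lemma mr_app_comp_liftTransposition {ml : Tl ⋙ Tl ⟶ Tl} {mr : Tr ⋙ Tr ⟶ Tr}
    (ht₁ : ∀ Y : M, mr.app (Tl.obj Y) ≫ t.app Y =
      Tr.map (t.app Y) ≫ t.app (Tr.obj Y) ≫ Tl.map (mr.app Y))
    (hw₂ : mr.app X ≫ w = Tr.map w ≫ t.app X ≫ Tl.map w ≫ ml.app X) :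
    ∀ n : ℕ, mr.app (fpow Tl n X) ≫ liftTransposition t w n =
      Tr.map (liftTransposition t w n) ≫ liftTransposition t w (n + 1) ≫ codeg Tl ml X n n
  | 0 => hw₂.trans (whisker_eq _ (Category.assoc _ _ _).symm)
  | n + 1 => mr_app_comp_app_comp_map t ht₁ (mr_app_comp_liftTransposition ht₁ hw₂ n)

end Transposition

section Paracocyclic

variable {Tl Tr : M ⥤ M} {t : Tl ⋙ Tr ⟶ Tr ⋙ Tl} {P : M ⥤ C} (i : Tl ⋙ P ⟶ Tr ⋙ P)
  {X : M} (w : Tr.obj X ⟶ Tl.obj X)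

lemma paraOp_eq_liftTransposition (n : ℕ) :
    paraOp Tl Tr t P i w n = i.app (fpow Tl n X) ≫ P.map (liftTransposition t w n) :=
  congrArg (i.app _ ≫ P.map ·) (distIter_comp_transIter t w n)

lemma map_map_comp_paraOp {m n : ℕ} {a : fpow Tl n X ⟶ fpow Tl m X}
    {b : fpow Tl (n + 1) X ⟶ fpow Tl (m + 1) X}
    (h : Tr.map a ≫ liftTransposition t w m = liftTransposition t w n ≫ b) :
    P.map (Tl.map a) ≫ paraOp Tl Tr t P i w m = paraOp Tl Tr t P i w n ≫ P.map b := by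
  rw [paraOp_eq_liftTransposition, paraOp_eq_liftTransposition]
  exact map_map_comp_app_comp_map i h

lemma map_coface_zero_comp_paraOp {ul : 𝟭 M ⟶ Tl} {ur : 𝟭 M ⟶ Tr}
    (hi₁ : ∀ Y : M, P.map (ul.app Y) ≫ i.app Y = P.map (ur.app Y))
    (ht₃ : ∀ Y : M, ur.app (Tl.obj Y) ≫ t.app Y = Tl.map (ur.app Y))
    (hw₁ : ur.app X ≫ w = ul.app X) (n : ℕ) :
    P.map (coface Tl ul X n 0) ≫ paraOp Tl Tr t P i w n = P.map (coface Tl ul X n n) := by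
  rw [paraOp_eq_liftTransposition, ← ur_app_comp_liftTransposition t w ht₃ hw₁, P.map_comp, ← hi₁,
    coface_zero]
  exact (Category.assoc _ _ _).symm

lemma map_ml_app_comp_app_comp_map_of_admissible {ml : Tl ⋙ Tl ⟶ Tl} {mr : Tr ⋙ Tr ⟶ Tr}
    (hi₂ : ∀ Y : M, P.map (ml.app Y) ≫ i.app Y =
      i.app (Tl.obj Y) ≫ P.map (t.app Y) ≫ i.app (Tr.obj Y) ≫ P.map (mr.app Y))
    {Y Z W : M} {f : Tr.obj Y ⟶ Z} {g : Tr.obj Z ⟶ W} {s : W ⟶ Z}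
    (h : mr.app Y ≫ f = Tr.map f ≫ g ≫ s) :
    P.map (ml.app Y) ≫ i.app Y ≫ P.map f =
      (i.app (Tl.obj Y) ≫ P.map (t.app Y ≫ Tl.map f)) ≫ (i.app Z ≫ P.map g) ≫ P.map s := by
  have hi := i.naturality f
  simp only [Functor.comp_map] at hi
  rw [reassoc_of% hi₂, ← P.map_comp, h, P.map_comp, P.map_comp, ← reassoc_of% hi]
  simp only [P.map_comp, Category.assoc]

lemma map_codeg_zero_comp_paraOp {ml : Tl ⋙ Tl ⟶ Tl} {mr : Tr ⋙ Tr ⟶ Tr}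
    (hi₂ : ∀ Y : M, P.map (ml.app Y) ≫ i.app Y =
      i.app (Tl.obj Y) ≫ P.map (t.app Y) ≫ i.app (Tr.obj Y) ≫ P.map (mr.app Y))
    (ht₁ : ∀ Y : M, mr.app (Tl.obj Y) ≫ t.app Y =
      Tr.map (t.app Y) ≫ t.app (Tr.obj Y) ≫ Tl.map (mr.app Y))
    (hw₂ : mr.app X ≫ w = Tr.map w ≫ t.app X ≫ Tl.map w ≫ ml.app X) (n : ℕ) :
    P.map (codeg Tl ml X n 0) ≫ paraOp Tl Tr t P i w n =
      paraOp Tl Tr t P i w (n + 1) ≫ paraOp Tl Tr t P i w (n + 1) ≫ P.map (codeg Tl ml X n n) := by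
  rw [paraOp_eq_liftTransposition, paraOp_eq_liftTransposition, codeg_zero]
  exact map_ml_app_comp_app_comp_map_of_admissible i hi₂
    (mr_app_comp_liftTransposition t w ht₁ hw₂ n)

end Paracocyclic

/-- The second and fourth families are the relations for `d_k` and `s_k` shifted by
`n ↦ n + 1`, `k ↦ k + 1`. -/
theorem paracocyclic_of_transposition_general
    (Tl Tr : M ⥤ M) (ml : Tl ⋙ Tl ⟶ Tl) (ul : 𝟭 M ⟶ Tl)
    (mr : Tr ⋙ Tr ⟶ Tr) (ur : 𝟭 M ⟶ Tr)
    (P : M ⥤ C) (t : Tl ⋙ Tr ⟶ Tr ⋙ Tl) (i : Tl ⋙ P ⟶ Tr ⋙ P)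
    -- `t` is a distributive law
    (ht₁ : ∀ X : M, mr.app (Tl.obj X) ≫ t.app X =
      Tr.map (t.app X) ≫ t.app (Tr.obj X) ≫ Tl.map (mr.app X))
    (ht₂ : ∀ X : M, Tr.map (ml.app X) ≫ t.app X =
      t.app (Tl.obj X) ≫ Tl.map (t.app X) ≫ ml.app (Tr.obj X))
    (ht₃ : ∀ X : M, ur.app (Tl.obj X) ≫ t.app X = Tl.map (ur.app X))
    (ht₄ : ∀ X : M, Tr.map (ul.app X) ≫ t.app X = ul.app (Tr.obj X))
    -- admissibility conditions on `i`
    (hi₁ : ∀ X : M, P.map (ul.app X) ≫ i.app X = P.map (ur.app X))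
    (hi₂ : ∀ X : M, P.map (ml.app X) ≫ i.app X =
      i.app (Tl.obj X) ≫ P.map (t.app X) ≫ i.app (Tr.obj X) ≫ P.map (mr.app X))
    -- `w` is a transposition morphism
    (X : M) (w : Tr.obj X ⟶ Tl.obj X)
    (hw₁ : ur.app X ≫ w = ul.app X)
    (hw₂ : mr.app X ≫ w = Tr.map w ≫ t.app X ≫ Tl.map w ≫ ml.app X) :
    (∀ n : ℕ, P.map (coface Tl ul X n 0) ≫ paraOp Tl Tr t P i w n =
      P.map (coface Tl ul X n n)) ∧
    (∀ n k : ℕ, k ≤ n →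
      P.map (coface Tl ul X (n + 1) (k + 1)) ≫ paraOp Tl Tr t P i w (n + 1) =
        paraOp Tl Tr t P i w n ≫ P.map (coface Tl ul X (n + 1) k)) ∧
    (∀ n : ℕ, P.map (codeg Tl ml X n 0) ≫ paraOp Tl Tr t P i w n =
      paraOp Tl Tr t P i w (n + 1) ≫ paraOp Tl Tr t P i w (n + 1) ≫
        P.map (codeg Tl ml X n n)) ∧
    (∀ n k : ℕ, k ≤ n →
      P.map (codeg Tl ml X (n + 1) (k + 1)) ≫ paraOp Tl Tr t P i w (n + 1) =
        paraOp Tl Tr t P i w (n + 2) ≫ P.map (codeg Tl ml X (n + 1) k)) :=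
  ⟨map_coface_zero_comp_paraOp i w hi₁ ht₃ hw₁,
    fun n k hk => map_map_comp_paraOp i w (map_coface_comp_liftTransposition t w ht₄ n k hk),
    map_codeg_zero_comp_paraOp i w hi₂ ht₁ hw₂,
    fun n k hk => map_map_comp_paraOp i w (map_codeg_comp_liftTransposition t w ht₂ n k hk)⟩

/-- For an admissible septuple and a transposition morphism `w`, the
cosimplex `Z^n = Π T_l^{n+1} X` is para-cocyclic with respect to `w_n`; explicitly
`w_n ∘ d_0 = d_n`, `w_n ∘ d_k = d_{k-1} ∘ w_{n-1}`, `w_n ∘ s_0 = s_n ∘ w_{n+1} ∘ w_{n+1}` and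
`w_n ∘ s_k = s_{k-1} ∘ w_{n+1}` for `1 ≤ k ≤ n`.  (In the second and fourth families below,
the indices have been shifted by one: `n ↦ n+1`, `k ↦ k+1`.) -/
theorem paracocyclic_of_transposition
    (Tl Tr : M ⥤ M) (ml : Tl ⋙ Tl ⟶ Tl) (ul : 𝟭 M ⟶ Tl)
    (mr : Tr ⋙ Tr ⟶ Tr) (ur : 𝟭 M ⟶ Tr)
    (P : M ⥤ C) (t : Tl ⋙ Tr ⟶ Tr ⋙ Tl) (i : Tl ⋙ P ⟶ Tr ⋙ P)
    -- `(T_l, ml, ul)` is a monad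
    (hml : ∀ X : M, Tl.map (ml.app X) ≫ ml.app X = ml.app (Tl.obj X) ≫ ml.app X)
    (hul₁ : ∀ X : M, ul.app (Tl.obj X) ≫ ml.app X = 𝟙 (Tl.obj X))
    (hul₂ : ∀ X : M, Tl.map (ul.app X) ≫ ml.app X = 𝟙 (Tl.obj X))
    -- `(T_r, mr, ur)` is a monad
    (hmr : ∀ X : M, Tr.map (mr.app X) ≫ mr.app X = mr.app (Tr.obj X) ≫ mr.app X)
    (hur₁ : ∀ X : M, ur.app (Tr.obj X) ≫ mr.app X = 𝟙 (Tr.obj X))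
    (hur₂ : ∀ X : M, Tr.map (ur.app X) ≫ mr.app X = 𝟙 (Tr.obj X))
    -- `t` is a distributive law
    (ht₁ : ∀ X : M, mr.app (Tl.obj X) ≫ t.app X =
      Tr.map (t.app X) ≫ t.app (Tr.obj X) ≫ Tl.map (mr.app X))
    (ht₂ : ∀ X : M, Tr.map (ml.app X) ≫ t.app X =
      t.app (Tl.obj X) ≫ Tl.map (t.app X) ≫ ml.app (Tr.obj X))
    (ht₃ : ∀ X : M, ur.app (Tl.obj X) ≫ t.app X = Tl.map (ur.app X))
    (ht₄ : ∀ X : M, Tr.map (ul.app X) ≫ t.app X = ul.app (Tr.obj X))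
    -- admissibility conditions on `i`
    (hi₁ : ∀ X : M, P.map (ul.app X) ≫ i.app X = P.map (ur.app X))
    (hi₂ : ∀ X : M, P.map (ml.app X) ≫ i.app X =
      i.app (Tl.obj X) ≫ P.map (t.app X) ≫ i.app (Tr.obj X) ≫ P.map (mr.app X))
    -- `w` is a transposition morphism
    (X : M) (w : Tr.obj X ⟶ Tl.obj X)
    (hw₁ : ur.app X ≫ w = ul.app X)
    (hw₂ : mr.app X ≫ w = Tr.map w ≫ t.app X ≫ Tl.map w ≫ ml.app X) :
    (∀ n : ℕ, P.map (coface Tl ul X n 0) ≫ paraOp Tl Tr t P i w n =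
      P.map (coface Tl ul X n n)) ∧
    (∀ n k : ℕ, k ≤ n →
      P.map (coface Tl ul X (n + 1) (k + 1)) ≫ paraOp Tl Tr t P i w (n + 1) =
        paraOp Tl Tr t P i w n ≫ P.map (coface Tl ul X (n + 1) k)) ∧
    (∀ n : ℕ, P.map (codeg Tl ml X n 0) ≫ paraOp Tl Tr t P i w n =
      paraOp Tl Tr t P i w (n + 1) ≫ paraOp Tl Tr t P i w (n + 1) ≫
        P.map (codeg Tl ml X n n)) ∧
    (∀ n k : ℕ, k ≤ n →
      P.map (codeg Tl ml X (n + 1) (k + 1)) ≫ paraOp Tl Tr t P i w (n + 1) =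
        paraOp Tl Tr t P i w (n + 2) ≫ P.map (codeg Tl ml X (n + 1) k)) :=
  paracocyclic_of_transposition_general Tl Tr ml ul mr ur P t i ht₁ ht₂ ht₃ ht₄ hi₁ hi₂ X w hw₁ hw₂

end Stmt0
end

section
/- Let (M, C, T_l, T_r, Π, t, i) be an admissible septuple and let w : T_r X → T_l X be a transposition morphism for an object X of M. Then ρ_w := (m_l)_X ∘ T_l(w) ∘ t_X : T_r T_l X → T_l X is an associative and unital T_r-module structure on T_l X (i.e. ρ_w ∘ T_r(ρ_w) = ρ_w ∘ (m_r)_{T_l X} and ρ_w ∘ (u_r)_{T_l X} = id), and it satisfies the compatibility condition (m_l)_X ∘ T_l(ρ_w) ∘ t_{T_l X} = ρ_w ∘ T_r((m_l)_X). -/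
/-!
Statement 2: For an admissible septuple and a transposition morphism `w : T_r X ⟶ T_l X`,
`ρ_w := (m_l)_X ∘ T_l(w) ∘ t_X` is an associative unital `T_r`-module structure on
`T_l X`, satisfying the compatibility condition
`(m_l)_X ∘ T_l(ρ_w) ∘ t_(T_l X) = ρ_w ∘ T_r((m_l)_X)`.
-/

open CategoryTheory

universe v u v' u'

namespace Stmt2

variable {M : Type u} [Category.{v} M]

/-- `fpow T n X` is the `n`-fold application `Tⁿ X`. -/
def fpow (T : M ⥤ M) : ℕ → M → M
  | 0, X => X
  | n + 1, X => T.obj (fpow T n X)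

/-- `coface T u X n k` represents the coface `d_k = Tᵏ (u_{T^{n-k} X}) : Tⁿ X ⟶ Tⁿ⁺¹ X`
(meaningful for `k ≤ n`). -/
def coface (T : M ⥤ M) (u : 𝟭 M ⟶ T) (X : M) : (n k : ℕ) → (fpow T n X ⟶ fpow T (n + 1) X)
  | n, 0 => u.app (fpow T n X)
  | n + 1, k + 1 => T.map (coface T u X n k)
  | 0, _ + 1 => u.app X

/-- `codeg T m X n k` represents the codegeneracy `s_k = Tᵏ (m_{T^{n-k} X}) : Tⁿ⁺² X ⟶ Tⁿ⁺¹ X`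
(meaningful for `k ≤ n`). -/
def codeg (T : M ⥤ M) (m : T ⋙ T ⟶ T) (X : M) : (n k : ℕ) → (fpow T (n + 2) X ⟶ fpow T (n + 1) X)
  | n, 0 => m.app (fpow T n X)
  | n + 1, k + 1 => T.map (codeg T m X n k)
  | 0, _ + 1 => m.app X

/-- The lifted distributive law
`t_n = T_l^{n-1} t ∘ ⋯ ∘ t T_l^{n-1} : T_r T_l^n X ⟶ T_l^n T_r X`. -/
def distIter (Tl Tr : M ⥤ M) (t : Tl ⋙ Tr ⟶ Tr ⋙ Tl) (X : M) :
    (n : ℕ) → (Tr.obj (fpow Tl n X) ⟶ fpow Tl n (Tr.obj X))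
  | 0 => 𝟙 (Tr.obj X)
  | n + 1 => t.app (fpow Tl n X) ≫ Tl.map (distIter Tl Tr t X n)

/-- `T_l^n w : T_l^n Y ⟶ T_l^{n+1} X` for `w : Y ⟶ T_l X`. -/
def transIter (T : M ⥤ M) {X Y : M} (w : Y ⟶ T.obj X) : (n : ℕ) → (fpow T n Y ⟶ fpow T (n + 1) X)
  | 0 => w
  | n + 1 => T.map (transIter T w n)

variable {C : Type u'} [Category.{v'} C]

/-- The para-cocyclic operator `w_n := Π(T_l^n w) ∘ (t_n)_X ∘ i_{T_l^n X}`. -/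
def paraOp (Tl Tr : M ⥤ M) (t : Tl ⋙ Tr ⟶ Tr ⋙ Tl) (P : M ⥤ C) (i : Tl ⋙ P ⟶ Tr ⋙ P)
    {X : M} (w : Tr.obj X ⟶ Tl.obj X) (n : ℕ) :
    P.obj (fpow Tl (n + 1) X) ⟶ P.obj (fpow Tl (n + 1) X) :=
  i.app (fpow Tl n X) ≫ P.map (distIter Tl Tr t X n ≫ transIter Tl w n)


theorem module_of_transposition
    (Tl Tr : M ⥤ M) (ml : Tl ⋙ Tl ⟶ Tl) (ul : 𝟭 M ⟶ Tl)
    (mr : Tr ⋙ Tr ⟶ Tr) (ur : 𝟭 M ⟶ Tr)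
    (P : M ⥤ C) (t : Tl ⋙ Tr ⟶ Tr ⋙ Tl) (i : Tl ⋙ P ⟶ Tr ⋙ P)
    -- `(T_l, ml, ul)` is a monad
    (hml : ∀ X : M, Tl.map (ml.app X) ≫ ml.app X = ml.app (Tl.obj X) ≫ ml.app X)
    (hul₁ : ∀ X : M, ul.app (Tl.obj X) ≫ ml.app X = 𝟙 (Tl.obj X))
    (hul₂ : ∀ X : M, Tl.map (ul.app X) ≫ ml.app X = 𝟙 (Tl.obj X))
    -- `(T_r, mr, ur)` is a monad
    (hmr : ∀ X : M, Tr.map (mr.app X) ≫ mr.app X = mr.app (Tr.obj X) ≫ mr.app X)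
    (hur₁ : ∀ X : M, ur.app (Tr.obj X) ≫ mr.app X = 𝟙 (Tr.obj X))
    (hur₂ : ∀ X : M, Tr.map (ur.app X) ≫ mr.app X = 𝟙 (Tr.obj X))
    -- `t` is a distributive law
    (ht₁ : ∀ X : M, mr.app (Tl.obj X) ≫ t.app X =
      Tr.map (t.app X) ≫ t.app (Tr.obj X) ≫ Tl.map (mr.app X))
    (ht₂ : ∀ X : M, Tr.map (ml.app X) ≫ t.app X =
      t.app (Tl.obj X) ≫ Tl.map (t.app X) ≫ ml.app (Tr.obj X))
    (ht₃ : ∀ X : M, ur.app (Tl.obj X) ≫ t.app X = Tl.map (ur.app X))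
    (ht₄ : ∀ X : M, Tr.map (ul.app X) ≫ t.app X = ul.app (Tr.obj X))
    -- admissibility conditions on `i`
    (hi₁ : ∀ X : M, P.map (ul.app X) ≫ i.app X = P.map (ur.app X))
    (hi₂ : ∀ X : M, P.map (ml.app X) ≫ i.app X =
      i.app (Tl.obj X) ≫ P.map (t.app X) ≫ i.app (Tr.obj X) ≫ P.map (mr.app X))
    -- `w` is a transposition morphism
    (X : M) (w : Tr.obj X ⟶ Tl.obj X)
    (hw₁ : ur.app X ≫ w = ul.app X)
    (hw₂ : mr.app X ≫ w = Tr.map w ≫ t.app X ≫ Tl.map w ≫ ml.app X) :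
    -- `ρ_w` is an associative action
    (Tr.map (t.app X ≫ Tl.map w ≫ ml.app X) ≫ (t.app X ≫ Tl.map w ≫ ml.app X) =
      mr.app (Tl.obj X) ≫ (t.app X ≫ Tl.map w ≫ ml.app X)) ∧
    -- `ρ_w` is unital
    (ur.app (Tl.obj X) ≫ (t.app X ≫ Tl.map w ≫ ml.app X) = 𝟙 (Tl.obj X)) ∧
    -- the compatibility condition
    (t.app (Tl.obj X) ≫ Tl.map (t.app X ≫ Tl.map w ≫ ml.app X) ≫ ml.app X =
      Tr.map (ml.app X) ≫ (t.app X ≫ Tl.map w ≫ ml.app X)) := by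

  refine ⟨?_, ?_, ?_⟩
  · -- associativity
    simp only [Functor.map_comp, Category.assoc]
    calc Tr.map (t.app X) ≫ Tr.map (Tl.map w) ≫ Tr.map (ml.app X) ≫ t.app X ≫
          Tl.map w ≫ ml.app X
        = Tr.map (t.app X) ≫ Tr.map (Tl.map w) ≫ t.app (Tl.obj X) ≫
            Tl.map (t.app X) ≫ ml.app (Tr.obj X) ≫ Tl.map w ≫ ml.app X := by
          rw [reassoc_of% (ht₂ X)]
      _ = Tr.map (t.app X) ≫ t.app (Tr.obj X) ≫ Tl.map (Tr.map w) ≫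
            Tl.map (t.app X) ≫ ml.app (Tr.obj X) ≫ Tl.map w ≫ ml.app X := by
          have := reassoc_of% (t.naturality w)
          rw [this]
      _ = Tr.map (t.app X) ≫ t.app (Tr.obj X) ≫ Tl.map (Tr.map w) ≫
            Tl.map (t.app X) ≫ Tl.map (Tl.map w) ≫ ml.app (Tl.obj X) ≫ ml.app X := by
          have := reassoc_of% (ml.naturality w)
          rw [← this]
      _ = Tr.map (t.app X) ≫ t.app (Tr.obj X) ≫ Tl.map (Tr.map w) ≫
            Tl.map (t.app X) ≫ Tl.map (Tl.map w) ≫ Tl.map (ml.app X) ≫ ml.app X := by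
          rw [hml X]
      _ = Tr.map (t.app X) ≫ t.app (Tr.obj X) ≫ Tl.map (mr.app X) ≫ Tl.map w ≫
            ml.app X := by
          have : Tl.map (Tr.map w) ≫ Tl.map (t.app X) ≫ Tl.map (Tl.map w) ≫
              Tl.map (ml.app X) = Tl.map (mr.app X) ≫ Tl.map w := by
            simp only [← Functor.map_comp]
            rw [← Category.assoc, ← Category.assoc, Category.assoc, Category.assoc, ← hw₂]
          rw [reassoc_of% this]
      _ = mr.app (Tl.obj X) ≫ t.app X ≫ Tl.map w ≫ ml.app X := by
          rw [reassoc_of% (ht₁ X).symm]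
  · -- unitality
    rw [reassoc_of% (ht₃ X), ← Functor.map_comp_assoc, hw₁, hul₂]
  · -- compatibility
    simp only [Functor.map_comp, Category.assoc]
    calc t.app (Tl.obj X) ≫ Tl.map (t.app X) ≫ Tl.map (Tl.map w) ≫
          Tl.map (ml.app X) ≫ ml.app X
        = t.app (Tl.obj X) ≫ Tl.map (t.app X) ≫ Tl.map (Tl.map w) ≫
            ml.app (Tl.obj X) ≫ ml.app X := by rw [hml X]
      _ = t.app (Tl.obj X) ≫ Tl.map (t.app X) ≫ ml.app (Tr.obj X) ≫
            Tl.map w ≫ ml.app X := by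
          have := reassoc_of% (ml.naturality w)
          rw [this]
      _ = Tr.map (ml.app X) ≫ t.app X ≫ Tl.map w ≫ ml.app X := by
          rw [reassoc_of% (ht₂ X).symm]


end Stmt2
end

section
/- Let (M, C, T_l, T_r, Π, t, i) be an admissible septuple and X an object of M. If ρ : T_r T_l X → T_l X is an associative unital T_r-module structure on T_l X satisfying (m_l)_X ∘ T_l(ρ) ∘ t_{T_l X} = ρ ∘ T_r((m_l)_X), then w_ρ := ρ ∘ T_r((u_l)_X) : T_r X → T_l X is a transposition morphism. Moreover, the assignments w ↦ ρ_w := (m_l)_X ∘ T_l(w) ∘ t_X and ρ ↦ w_ρ are mutually inverse, giving a bijective correspondence between transposition morphisms w : T_r X → T_l X and T_r-module structures ρ on T_l X satisfying the above compatibility condition. -/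
/-!
Statement 3: For an admissible septuple, the assignments `w ↦ ρ_w := (m_l)_X ∘ T_l(w) ∘ t_X`
and `ρ ↦ w_ρ := ρ ∘ T_r((u_l)_X)` give a bijective correspondence between transposition
morphisms `w : T_r X ⟶ T_l X` and `T_r`-module structures `ρ` on `T_l X` satisfying the
compatibility condition `(m_l)_X ∘ T_l(ρ) ∘ t_(T_l X) = ρ ∘ T_r((m_l)_X)`.
-/

open CategoryTheory

universe v u v' u'

namespace Stmt3

variable {M : Type u} [Category.{v} M]

/-- `fpow T n X` is the `n`-fold application `Tⁿ X`. -/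
def fpow (T : M ⥤ M) : ℕ → M → M
  | 0, X => X
  | n + 1, X => T.obj (fpow T n X)

/-- `coface T u X n k` represents the coface `d_k = Tᵏ (u_{T^{n-k} X}) : Tⁿ X ⟶ Tⁿ⁺¹ X`
(meaningful for `k ≤ n`). -/
def coface (T : M ⥤ M) (u : 𝟭 M ⟶ T) (X : M) : (n k : ℕ) → (fpow T n X ⟶ fpow T (n + 1) X)
  | n, 0 => u.app (fpow T n X)
  | n + 1, k + 1 => T.map (coface T u X n k)
  | 0, _ + 1 => u.app X

/-- `codeg T m X n k` represents the codegeneracy `s_k = Tᵏ (m_{T^{n-k} X}) : Tⁿ⁺² X ⟶ Tⁿ⁺¹ X`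
(meaningful for `k ≤ n`). -/
def codeg (T : M ⥤ M) (m : T ⋙ T ⟶ T) (X : M) : (n k : ℕ) → (fpow T (n + 2) X ⟶ fpow T (n + 1) X)
  | n, 0 => m.app (fpow T n X)
  | n + 1, k + 1 => T.map (codeg T m X n k)
  | 0, _ + 1 => m.app X

/-- The lifted distributive law
`t_n = T_l^{n-1} t ∘ ⋯ ∘ t T_l^{n-1} : T_r T_l^n X ⟶ T_l^n T_r X`. -/
def distIter (Tl Tr : M ⥤ M) (t : Tl ⋙ Tr ⟶ Tr ⋙ Tl) (X : M) :
    (n : ℕ) → (Tr.obj (fpow Tl n X) ⟶ fpow Tl n (Tr.obj X))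
  | 0 => 𝟙 (Tr.obj X)
  | n + 1 => t.app (fpow Tl n X) ≫ Tl.map (distIter Tl Tr t X n)

/-- `T_l^n w : T_l^n Y ⟶ T_l^{n+1} X` for `w : Y ⟶ T_l X`. -/
def transIter (T : M ⥤ M) {X Y : M} (w : Y ⟶ T.obj X) : (n : ℕ) → (fpow T n Y ⟶ fpow T (n + 1) X)
  | 0 => w
  | n + 1 => T.map (transIter T w n)

variable {C : Type u'} [Category.{v'} C]

/-- The para-cocyclic operator `w_n := Π(T_l^n w) ∘ (t_n)_X ∘ i_{T_l^n X}`. -/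
def paraOp (Tl Tr : M ⥤ M) (t : Tl ⋙ Tr ⟶ Tr ⋙ Tl) (P : M ⥤ C) (i : Tl ⋙ P ⟶ Tr ⋙ P)
    {X : M} (w : Tr.obj X ⟶ Tl.obj X) (n : ℕ) :
    P.obj (fpow Tl (n + 1) X) ⟶ P.obj (fpow Tl (n + 1) X) :=
  i.app (fpow Tl n X) ≫ P.map (distIter Tl Tr t X n ≫ transIter Tl w n)


theorem transposition_module_bijection
    (Tl Tr : M ⥤ M) (ml : Tl ⋙ Tl ⟶ Tl) (ul : 𝟭 M ⟶ Tl)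
    (mr : Tr ⋙ Tr ⟶ Tr) (ur : 𝟭 M ⟶ Tr)
    (P : M ⥤ C) (t : Tl ⋙ Tr ⟶ Tr ⋙ Tl) (i : Tl ⋙ P ⟶ Tr ⋙ P)
    -- `(T_l, ml, ul)` is a monad
    (hml : ∀ X : M, Tl.map (ml.app X) ≫ ml.app X = ml.app (Tl.obj X) ≫ ml.app X)
    (hul₁ : ∀ X : M, ul.app (Tl.obj X) ≫ ml.app X = 𝟙 (Tl.obj X))
    (hul₂ : ∀ X : M, Tl.map (ul.app X) ≫ ml.app X = 𝟙 (Tl.obj X))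
    -- `(T_r, mr, ur)` is a monad
    (hmr : ∀ X : M, Tr.map (mr.app X) ≫ mr.app X = mr.app (Tr.obj X) ≫ mr.app X)
    (hur₁ : ∀ X : M, ur.app (Tr.obj X) ≫ mr.app X = 𝟙 (Tr.obj X))
    (hur₂ : ∀ X : M, Tr.map (ur.app X) ≫ mr.app X = 𝟙 (Tr.obj X))
    -- `t` is a distributive law
    (ht₁ : ∀ X : M, mr.app (Tl.obj X) ≫ t.app X =
      Tr.map (t.app X) ≫ t.app (Tr.obj X) ≫ Tl.map (mr.app X))
    (ht₂ : ∀ X : M, Tr.map (ml.app X) ≫ t.app X =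
      t.app (Tl.obj X) ≫ Tl.map (t.app X) ≫ ml.app (Tr.obj X))
    (ht₃ : ∀ X : M, ur.app (Tl.obj X) ≫ t.app X = Tl.map (ur.app X))
    (ht₄ : ∀ X : M, Tr.map (ul.app X) ≫ t.app X = ul.app (Tr.obj X))
    -- admissibility conditions on `i`
    (hi₁ : ∀ X : M, P.map (ul.app X) ≫ i.app X = P.map (ur.app X))
    (hi₂ : ∀ X : M, P.map (ml.app X) ≫ i.app X =
      i.app (Tl.obj X) ≫ P.map (t.app X) ≫ i.app (Tr.obj X) ≫ P.map (mr.app X))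
    (X : M) :
    -- for a transposition morphism `w`, `ρ_w` is a compatible `T_r`-module structure
    -- and `w_(ρ_w) = w`
    (∀ w : Tr.obj X ⟶ Tl.obj X,
      ur.app X ≫ w = ul.app X →
      mr.app X ≫ w = Tr.map w ≫ t.app X ≫ Tl.map w ≫ ml.app X →
      (Tr.map (t.app X ≫ Tl.map w ≫ ml.app X) ≫ (t.app X ≫ Tl.map w ≫ ml.app X) =
        mr.app (Tl.obj X) ≫ (t.app X ≫ Tl.map w ≫ ml.app X)) ∧
      (ur.app (Tl.obj X) ≫ (t.app X ≫ Tl.map w ≫ ml.app X) = 𝟙 (Tl.obj X)) ∧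
      (t.app (Tl.obj X) ≫ Tl.map (t.app X ≫ Tl.map w ≫ ml.app X) ≫ ml.app X =
        Tr.map (ml.app X) ≫ (t.app X ≫ Tl.map w ≫ ml.app X)) ∧
      (Tr.map (ul.app X) ≫ (t.app X ≫ Tl.map w ≫ ml.app X) = w)) ∧
    -- for a compatible `T_r`-module structure `ρ`, `w_ρ` is a transposition morphism
    -- and `ρ_(w_ρ) = ρ`
    (∀ ρ : Tr.obj (Tl.obj X) ⟶ Tl.obj X,
      Tr.map ρ ≫ ρ = mr.app (Tl.obj X) ≫ ρ →
      ur.app (Tl.obj X) ≫ ρ = 𝟙 (Tl.obj X) →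
      t.app (Tl.obj X) ≫ Tl.map ρ ≫ ml.app X = Tr.map (ml.app X) ≫ ρ →
      (ur.app X ≫ (Tr.map (ul.app X) ≫ ρ) = ul.app X) ∧
      (mr.app X ≫ (Tr.map (ul.app X) ≫ ρ) =
        Tr.map (Tr.map (ul.app X) ≫ ρ) ≫ t.app X ≫
          Tl.map (Tr.map (ul.app X) ≫ ρ) ≫ ml.app X) ∧
      (t.app X ≫ Tl.map (Tr.map (ul.app X) ≫ ρ) ≫ ml.app X = ρ)) := by
  have natt : ∀ {A B : M} (f : A ⟶ B),
      Tr.map (Tl.map f) ≫ t.app B = t.app A ≫ Tl.map (Tr.map f) := by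
    intro A B f; simpa using t.naturality f
  have natml : ∀ {A B : M} (f : A ⟶ B),
      Tl.map (Tl.map f) ≫ ml.app B = ml.app A ≫ Tl.map f := by
    intro A B f; simpa using ml.naturality f
  have natmr : ∀ {A B : M} (f : A ⟶ B),
      Tr.map (Tr.map f) ≫ mr.app B = mr.app A ≫ Tr.map f := by
    intro A B f; simpa using mr.naturality f
  have natul : ∀ {A B : M} (f : A ⟶ B),
      f ≫ ul.app B = ul.app A ≫ Tl.map f := by
    intro A B f; simpa using ul.naturality f
  have natur : ∀ {A B : M} (f : A ⟶ B),
      f ≫ ur.app B = ur.app A ≫ Tr.map f := by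
    intro A B f; simpa using ur.naturality f
  constructor
  · intro w hw1 hw2
    refine ⟨?_, ?_, ?_, ?_⟩
    · -- associativity
      calc Tr.map (t.app X ≫ Tl.map w ≫ ml.app X) ≫ t.app X ≫ Tl.map w ≫ ml.app X
          = Tr.map (t.app X) ≫ Tr.map (Tl.map w) ≫ Tr.map (ml.app X) ≫
              t.app X ≫ Tl.map w ≫ ml.app X := by
            simp [Functor.map_comp]
        _ = Tr.map (t.app X) ≫ Tr.map (Tl.map w) ≫ t.app (Tl.obj X) ≫
              Tl.map (t.app X) ≫ ml.app (Tr.obj X) ≫ Tl.map w ≫ ml.app X := by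
            rw [reassoc_of% ht₂ X]
        _ = Tr.map (t.app X) ≫ t.app (Tr.obj X) ≫ Tl.map (Tr.map w) ≫
              Tl.map (t.app X) ≫ ml.app (Tr.obj X) ≫ Tl.map w ≫ ml.app X := by
            rw [reassoc_of% natt w]
        _ = Tr.map (t.app X) ≫ t.app (Tr.obj X) ≫ Tl.map (Tr.map w) ≫
              Tl.map (t.app X) ≫ Tl.map (Tl.map w) ≫ ml.app (Tl.obj X) ≫ ml.app X := by
            rw [← reassoc_of% natml w]
        _ = Tr.map (t.app X) ≫ t.app (Tr.obj X) ≫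
              Tl.map (Tr.map w ≫ t.app X ≫ Tl.map w ≫ ml.app X) ≫ ml.app X := by
            rw [← hml X]
            simp [Functor.map_comp]
        _ = Tr.map (t.app X) ≫ t.app (Tr.obj X) ≫
              Tl.map (mr.app X ≫ w) ≫ ml.app X := by rw [← hw2]
        _ = mr.app (Tl.obj X) ≫ t.app X ≫ Tl.map w ≫ ml.app X := by
            rw [reassoc_of% ht₁ X]; simp [Functor.map_comp]
    · -- unitality
      rw [reassoc_of% ht₃ X, ← Functor.map_comp_assoc, hw1, hul₂ X]
    · -- compatibility
      calc t.app (Tl.obj X) ≫ Tl.map (t.app X ≫ Tl.map w ≫ ml.app X) ≫ ml.app X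
          = t.app (Tl.obj X) ≫ Tl.map (t.app X) ≫ Tl.map (Tl.map w) ≫
              Tl.map (ml.app X) ≫ ml.app X := by simp [Functor.map_comp]
        _ = t.app (Tl.obj X) ≫ Tl.map (t.app X) ≫ Tl.map (Tl.map w) ≫
              ml.app (Tl.obj X) ≫ ml.app X := by rw [hml X]
        _ = t.app (Tl.obj X) ≫ Tl.map (t.app X) ≫ ml.app (Tr.obj X) ≫
              Tl.map w ≫ ml.app X := by rw [reassoc_of% natml w]
        _ = Tr.map (ml.app X) ≫ t.app X ≫ Tl.map w ≫ ml.app X := by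
            rw [reassoc_of% ht₂ X]
    · -- `w_(ρ_w) = w`
      rw [reassoc_of% ht₄ X, ← reassoc_of% natul w, hul₁ X, Category.comp_id]
  · intro ρ hρ1 hρ2 hρ3
    have key : t.app X ≫ Tl.map (Tr.map (ul.app X) ≫ ρ) ≫ ml.app X = ρ := by
      calc t.app X ≫ Tl.map (Tr.map (ul.app X) ≫ ρ) ≫ ml.app X
          = t.app X ≫ Tl.map (Tr.map (ul.app X)) ≫ Tl.map ρ ≫ ml.app X := by
            simp [Functor.map_comp]
        _ = Tr.map (Tl.map (ul.app X)) ≫ t.app (Tl.obj X) ≫ Tl.map ρ ≫ ml.app X := by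
            rw [reassoc_of% natt (ul.app X)]
        _ = Tr.map (Tl.map (ul.app X)) ≫ Tr.map (ml.app X) ≫ ρ := by rw [hρ3]
        _ = ρ := by rw [← Functor.map_comp_assoc, hul₂ X]; simp
    refine ⟨?_, ?_, key⟩
    · rw [← reassoc_of% natur (ul.app X), hρ2, Category.comp_id]
    · rw [key, Functor.map_comp, Category.assoc, hρ1, reassoc_of% natmr (ul.app X)]


end Stmt3
end

section
/- Let (M, C, T_l, T_r, Π, t, i) be an admissible septuple, let w : T_r X → T_l X and w' : T_r X' → T_l X' be transposition morphisms, and set ρ_w := (m_l)_X ∘ T_l(w) ∘ t_X and ρ_{w'} := (m_l)_{X'} ∘ T_l(w') ∘ t_{X'}. A morphism f : X → X' of M satisfies T_l(f) ∘ w = w' ∘ T_r(f) if and only if T_l(f) is a morphism of T_r-modules from (T_l X, ρ_w) to (T_l X', ρ_{w'}), i.e. T_l(f) ∘ ρ_w = ρ_{w'} ∘ T_r(T_l(f)). -/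
/-!
Statement 4: For an admissible septuple and transposition morphisms `w`, `w'`, a morphism
`f : X ⟶ X'` satisfies `T_l(f) ∘ w = w' ∘ T_r(f)` if and only if `T_l(f)` is a morphism of
`T_r`-modules `(T_l X, ρ_w) ⟶ (T_l X', ρ_(w'))`.
-/

open CategoryTheory

universe v u v' u'

namespace Stmt4

variable {M : Type u} [Category.{v} M]

/-- `fpow T n X` is the `n`-fold application `Tⁿ X`. -/
def fpow (T : M ⥤ M) : ℕ → M → M
  | 0, X => X
  | n + 1, X => T.obj (fpow T n X)

/-- `coface T u X n k` represents the coface `d_k = Tᵏ (u_{T^{n-k} X}) : Tⁿ X ⟶ Tⁿ⁺¹ X`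
(meaningful for `k ≤ n`). -/
def coface (T : M ⥤ M) (u : 𝟭 M ⟶ T) (X : M) : (n k : ℕ) → (fpow T n X ⟶ fpow T (n + 1) X)
  | n, 0 => u.app (fpow T n X)
  | n + 1, k + 1 => T.map (coface T u X n k)
  | 0, _ + 1 => u.app X

/-- `codeg T m X n k` represents the codegeneracy `s_k = Tᵏ (m_{T^{n-k} X}) : Tⁿ⁺² X ⟶ Tⁿ⁺¹ X`
(meaningful for `k ≤ n`). -/
def codeg (T : M ⥤ M) (m : T ⋙ T ⟶ T) (X : M) : (n k : ℕ) → (fpow T (n + 2) X ⟶ fpow T (n + 1) X)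
  | n, 0 => m.app (fpow T n X)
  | n + 1, k + 1 => T.map (codeg T m X n k)
  | 0, _ + 1 => m.app X

/-- The lifted distributive law
`t_n = T_l^{n-1} t ∘ ⋯ ∘ t T_l^{n-1} : T_r T_l^n X ⟶ T_l^n T_r X`. -/
def distIter (Tl Tr : M ⥤ M) (t : Tl ⋙ Tr ⟶ Tr ⋙ Tl) (X : M) :
    (n : ℕ) → (Tr.obj (fpow Tl n X) ⟶ fpow Tl n (Tr.obj X))
  | 0 => 𝟙 (Tr.obj X)
  | n + 1 => t.app (fpow Tl n X) ≫ Tl.map (distIter Tl Tr t X n)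

/-- `T_l^n w : T_l^n Y ⟶ T_l^{n+1} X` for `w : Y ⟶ T_l X`. -/
def transIter (T : M ⥤ M) {X Y : M} (w : Y ⟶ T.obj X) : (n : ℕ) → (fpow T n Y ⟶ fpow T (n + 1) X)
  | 0 => w
  | n + 1 => T.map (transIter T w n)

variable {C : Type u'} [Category.{v'} C]

/-- The para-cocyclic operator `w_n := Π(T_l^n w) ∘ (t_n)_X ∘ i_{T_l^n X}`. -/
def paraOp (Tl Tr : M ⥤ M) (t : Tl ⋙ Tr ⟶ Tr ⋙ Tl) (P : M ⥤ C) (i : Tl ⋙ P ⟶ Tr ⋙ P)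
    {X : M} (w : Tr.obj X ⟶ Tl.obj X) (n : ℕ) :
    P.obj (fpow Tl (n + 1) X) ⟶ P.obj (fpow Tl (n + 1) X) :=
  i.app (fpow Tl n X) ≫ P.map (distIter Tl Tr t X n ≫ transIter Tl w n)


theorem morphism_iff_module_morphism
    (Tl Tr : M ⥤ M) (ml : Tl ⋙ Tl ⟶ Tl) (ul : 𝟭 M ⟶ Tl)
    (mr : Tr ⋙ Tr ⟶ Tr) (ur : 𝟭 M ⟶ Tr)
    (P : M ⥤ C) (t : Tl ⋙ Tr ⟶ Tr ⋙ Tl) (i : Tl ⋙ P ⟶ Tr ⋙ P)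
    -- `(T_l, ml, ul)` is a monad
    (hml : ∀ X : M, Tl.map (ml.app X) ≫ ml.app X = ml.app (Tl.obj X) ≫ ml.app X)
    (hul₁ : ∀ X : M, ul.app (Tl.obj X) ≫ ml.app X = 𝟙 (Tl.obj X))
    (hul₂ : ∀ X : M, Tl.map (ul.app X) ≫ ml.app X = 𝟙 (Tl.obj X))
    -- `(T_r, mr, ur)` is a monad
    (hmr : ∀ X : M, Tr.map (mr.app X) ≫ mr.app X = mr.app (Tr.obj X) ≫ mr.app X)
    (hur₁ : ∀ X : M, ur.app (Tr.obj X) ≫ mr.app X = 𝟙 (Tr.obj X))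
    (hur₂ : ∀ X : M, Tr.map (ur.app X) ≫ mr.app X = 𝟙 (Tr.obj X))
    -- `t` is a distributive law
    (ht₁ : ∀ X : M, mr.app (Tl.obj X) ≫ t.app X =
      Tr.map (t.app X) ≫ t.app (Tr.obj X) ≫ Tl.map (mr.app X))
    (ht₂ : ∀ X : M, Tr.map (ml.app X) ≫ t.app X =
      t.app (Tl.obj X) ≫ Tl.map (t.app X) ≫ ml.app (Tr.obj X))
    (ht₃ : ∀ X : M, ur.app (Tl.obj X) ≫ t.app X = Tl.map (ur.app X))
    (ht₄ : ∀ X : M, Tr.map (ul.app X) ≫ t.app X = ul.app (Tr.obj X))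
    -- admissibility conditions on `i`
    (hi₁ : ∀ X : M, P.map (ul.app X) ≫ i.app X = P.map (ur.app X))
    (hi₂ : ∀ X : M, P.map (ml.app X) ≫ i.app X =
      i.app (Tl.obj X) ≫ P.map (t.app X) ≫ i.app (Tr.obj X) ≫ P.map (mr.app X))
    -- transposition morphisms `w`, `w'`
    (X X' : M) (w : Tr.obj X ⟶ Tl.obj X) (w' : Tr.obj X' ⟶ Tl.obj X')
    (hw₁ : ur.app X ≫ w = ul.app X)
    (hw₂ : mr.app X ≫ w = Tr.map w ≫ t.app X ≫ Tl.map w ≫ ml.app X)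
    (hw₁' : ur.app X' ≫ w' = ul.app X')
    (hw₂' : mr.app X' ≫ w' = Tr.map w' ≫ t.app X' ≫ Tl.map w' ≫ ml.app X')
    (f : X ⟶ X') :
    (w ≫ Tl.map f = Tr.map f ≫ w') ↔
    ((t.app X ≫ Tl.map w ≫ ml.app X) ≫ Tl.map f =
      Tr.map (Tl.map f) ≫ (t.app X' ≫ Tl.map w' ≫ ml.app X')) := by
  have hnat_t : Tr.map (Tl.map f) ≫ t.app X' = t.app X ≫ Tl.map (Tr.map f) := by
    simpa using t.naturality f
  have hnat_ml : Tl.map (Tl.map f) ≫ ml.app X' = ml.app X ≫ Tl.map f := by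
    simpa using ml.naturality f
  have hnat_ulw : w ≫ ul.app (Tl.obj X) = ul.app (Tr.obj X) ≫ Tl.map w := by
    simpa using ul.naturality w
  have hnat_ulw' : w' ≫ ul.app (Tl.obj X') = ul.app (Tr.obj X') ≫ Tl.map w' := by
    simpa using ul.naturality w'
  have hnat_ulf : f ≫ ul.app X' = ul.app X ≫ Tl.map f := by
    simpa using ul.naturality f
  constructor
  · intro h
    calc (t.app X ≫ Tl.map w ≫ ml.app X) ≫ Tl.map f
        = t.app X ≫ Tl.map w ≫ (ml.app X ≫ Tl.map f) := by simp
      _ = t.app X ≫ Tl.map w ≫ Tl.map (Tl.map f) ≫ ml.app X' := by rw [hnat_ml]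
      _ = t.app X ≫ Tl.map (w ≫ Tl.map f) ≫ ml.app X' := by simp
      _ = t.app X ≫ Tl.map (Tr.map f ≫ w') ≫ ml.app X' := by rw [h]
      _ = (t.app X ≫ Tl.map (Tr.map f)) ≫ Tl.map w' ≫ ml.app X' := by simp
      _ = Tr.map (Tl.map f) ≫ t.app X' ≫ Tl.map w' ≫ ml.app X' := by rw [← hnat_t]; simp
  · intro h
    have h2 := congrArg (fun g => Tr.map (ul.app X) ≫ g) h
    calc w ≫ Tl.map f
        = (w ≫ ul.app (Tl.obj X)) ≫ ml.app X ≫ Tl.map f := by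
            simp only [Category.assoc]; rw [reassoc_of% hul₁ X]
      _ = ul.app (Tr.obj X) ≫ Tl.map w ≫ ml.app X ≫ Tl.map f := by rw [hnat_ulw]; simp
      _ = (Tr.map (ul.app X) ≫ t.app X) ≫ Tl.map w ≫ ml.app X ≫ Tl.map f := by rw [ht₄]
      _ = Tr.map (ul.app X) ≫ (t.app X ≫ Tl.map w ≫ ml.app X) ≫ Tl.map f := by simp
      _ = Tr.map (ul.app X) ≫ Tr.map (Tl.map f) ≫ t.app X' ≫ Tl.map w' ≫ ml.app X' := by
            rw [h2]
      _ = Tr.map (ul.app X ≫ Tl.map f) ≫ t.app X' ≫ Tl.map w' ≫ ml.app X' := by simp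
      _ = Tr.map (f ≫ ul.app X') ≫ t.app X' ≫ Tl.map w' ≫ ml.app X' := by rw [hnat_ulf]
      _ = Tr.map f ≫ (Tr.map (ul.app X') ≫ t.app X') ≫ Tl.map w' ≫ ml.app X' := by simp
      _ = Tr.map f ≫ ul.app (Tr.obj X') ≫ Tl.map w' ≫ ml.app X' := by rw [ht₄]
      _ = Tr.map f ≫ (w' ≫ ul.app (Tl.obj X')) ≫ ml.app X' := by rw [hnat_ulw']; simp
      _ = Tr.map f ≫ w' := by rw [Category.assoc, hul₁]; simp

end Stmt4
end

section
/- Let (T, m, u) be a monad on a category M and let t : T T → T T be a distributive law of the monad T with itself which satisfies the Yang–Baxter relation (t T) ∘ (T t) ∘ (t T) = (T t) ∘ (t T) ∘ (T t) (as natural transformations T T T → T T T) and the relation m ∘ t ∘ t = m. Then T^0 := (T, m ∘ t, u) is again a monad on M, i.e. m ∘ t is associative ((m ∘ t) ∘ (T (m ∘ t)) = (m ∘ t) ∘ ((m ∘ t) T)) and unital with respect to u. -/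
/-!
Statement 6: If `(T, m, u)` is a monad on `M` and `t : T T ⟶ T T` is a distributive law of
`T` with itself satisfying the Yang–Baxter relation and `m ∘ t ∘ t = m`, then
`T⁰ := (T, m ∘ t, u)` is again a monad on `M`.
-/

open CategoryTheory

universe v u

theorem deformed_monad {M : Type u} [Category.{v} M]
    (T : M ⥤ M) (m : T ⋙ T ⟶ T) (u : 𝟭 M ⟶ T)
    -- `(T, m, u)` is a monad
    (hm : ∀ X : M, T.map (m.app X) ≫ m.app X = m.app (T.obj X) ≫ m.app X)
    (hu₁ : ∀ X : M, u.app (T.obj X) ≫ m.app X = 𝟙 (T.obj X))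
    (hu₂ : ∀ X : M, T.map (u.app X) ≫ m.app X = 𝟙 (T.obj X))
    -- `t` is a distributive law of the monad `T` with itself
    (t : T ⋙ T ⟶ T ⋙ T)
    (ht₁ : ∀ X : M, m.app (T.obj X) ≫ t.app X =
      T.map (t.app X) ≫ t.app (T.obj X) ≫ T.map (m.app X))
    (ht₂ : ∀ X : M, T.map (m.app X) ≫ t.app X =
      t.app (T.obj X) ≫ T.map (t.app X) ≫ m.app (T.obj X))
    (ht₃ : ∀ X : M, u.app (T.obj X) ≫ t.app X = T.map (u.app X))
    (ht₄ : ∀ X : M, T.map (u.app X) ≫ t.app X = u.app (T.obj X))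
    -- the Yang–Baxter relation `(tT) ∘ (Tt) ∘ (tT) = (Tt) ∘ (tT) ∘ (Tt)`
    (hYB : ∀ X : M, t.app (T.obj X) ≫ T.map (t.app X) ≫ t.app (T.obj X) =
      T.map (t.app X) ≫ t.app (T.obj X) ≫ T.map (t.app X))
    -- the relation `m ∘ t ∘ t = m`
    (hmtt : ∀ X : M, t.app X ≫ t.app X ≫ m.app X = m.app X) :
    -- `m ∘ t` is associative: `(m∘t) ∘ (T(m∘t)) = (m∘t) ∘ ((m∘t)T)`
    (∀ X : M, T.map (t.app X ≫ m.app X) ≫ (t.app X ≫ m.app X) =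
      (t.app (T.obj X) ≫ m.app (T.obj X)) ≫ (t.app X ≫ m.app X)) ∧
    -- `m ∘ t` is unital with respect to `u`
    (∀ X : M, u.app (T.obj X) ≫ t.app X ≫ m.app X = 𝟙 (T.obj X)) ∧
    (∀ X : M, T.map (u.app X) ≫ t.app X ≫ m.app X = 𝟙 (T.obj X)) := by
  refine ⟨?_, ?_, ?_⟩
  · intro X
    calc T.map (t.app X ≫ m.app X) ≫ t.app X ≫ m.app X
        = T.map (t.app X) ≫ (T.map (m.app X) ≫ t.app X) ≫ m.app X := by
          simp [Functor.map_comp]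
      _ = T.map (t.app X) ≫ (t.app (T.obj X) ≫ T.map (t.app X) ≫ m.app (T.obj X)) ≫ m.app X := by
          rw [ht₂]
      _ = (T.map (t.app X) ≫ t.app (T.obj X) ≫ T.map (t.app X)) ≫ m.app (T.obj X) ≫ m.app X := by
          simp
      _ = (t.app (T.obj X) ≫ T.map (t.app X) ≫ t.app (T.obj X)) ≫ m.app (T.obj X) ≫ m.app X := by
          rw [hYB]
      _ = t.app (T.obj X) ≫ T.map (t.app X) ≫ t.app (T.obj X) ≫ T.map (m.app X) ≫ m.app X := by
          simp [hm]
      _ = t.app (T.obj X) ≫ (m.app (T.obj X) ≫ t.app X) ≫ m.app X := by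
          rw [ht₁]; simp
      _ = (t.app (T.obj X) ≫ m.app (T.obj X)) ≫ t.app X ≫ m.app X := by simp
  · intro X
    rw [← Category.assoc, ht₃, hu₂]
  · intro X
    rw [← Category.assoc, ht₄, hu₁]
end

section
/- Let (T, m, u) be a monad on a category M and let t : T T → T T be a distributive law of the monad T with itself which satisfies the Yang–Baxter relation (t T) ∘ (T t) ∘ (t T) = (T t) ∘ (t T) ∘ (T t) and the relation m ∘ t ∘ t = m, and set T^0 := (T, m ∘ t, u). Then t, regarded as a natural transformation T^0 T → T T^0, satisfies all four axioms of a distributive law between the monads T^0 and T; in particular t ∘ ((m ∘ t) T) = (T (m ∘ t)) ∘ (t T) ∘ (T t) and t ∘ (T m) = (m T) ∘ (T t) ∘ (t T) as natural transformations. -/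
/-!
Statement 7: If `(T, m, u)` is a monad, `t : T T ⟶ T T` a distributive law of `T` with
itself satisfying the Yang–Baxter relation and `m ∘ t ∘ t = m`, and `T⁰ := (T, m ∘ t, u)`,
then `t`, regarded as a natural transformation `T⁰ T ⟶ T T⁰`, satisfies all four axioms of
a distributive law between the monads `T⁰` and `T` (with `T⁰` in the role of `T_r` and `T`
in the role of `T_l`).
-/

open CategoryTheory

universe v u

theorem deformed_distributive_law {M : Type u} [Category.{v} M]
    (T : M ⥤ M) (m : T ⋙ T ⟶ T) (u : 𝟭 M ⟶ T)
    -- `(T, m, u)` is a monad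
    (hm : ∀ X : M, T.map (m.app X) ≫ m.app X = m.app (T.obj X) ≫ m.app X)
    (hu₁ : ∀ X : M, u.app (T.obj X) ≫ m.app X = 𝟙 (T.obj X))
    (hu₂ : ∀ X : M, T.map (u.app X) ≫ m.app X = 𝟙 (T.obj X))
    -- `t` is a distributive law of the monad `T` with itself
    (t : T ⋙ T ⟶ T ⋙ T)
    (ht₁ : ∀ X : M, m.app (T.obj X) ≫ t.app X =
      T.map (t.app X) ≫ t.app (T.obj X) ≫ T.map (m.app X))
    (ht₂ : ∀ X : M, T.map (m.app X) ≫ t.app X =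
      t.app (T.obj X) ≫ T.map (t.app X) ≫ m.app (T.obj X))
    (ht₃ : ∀ X : M, u.app (T.obj X) ≫ t.app X = T.map (u.app X))
    (ht₄ : ∀ X : M, T.map (u.app X) ≫ t.app X = u.app (T.obj X))
    -- the Yang–Baxter relation `(tT) ∘ (Tt) ∘ (tT) = (Tt) ∘ (tT) ∘ (Tt)`
    (hYB : ∀ X : M, t.app (T.obj X) ≫ T.map (t.app X) ≫ t.app (T.obj X) =
      T.map (t.app X) ≫ t.app (T.obj X) ≫ T.map (t.app X))
    -- the relation `m ∘ t ∘ t = m`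
    (hmtt : ∀ X : M, t.app X ≫ t.app X ≫ m.app X = m.app X) :
    -- axiom 1: `t ∘ ((m ∘ t) T) = (T (m ∘ t)) ∘ (t T) ∘ (T t)`
    (∀ X : M, (t.app (T.obj X) ≫ m.app (T.obj X)) ≫ t.app X =
      T.map (t.app X) ≫ t.app (T.obj X) ≫ T.map (t.app X ≫ m.app X)) ∧
    -- axiom 2: `t ∘ (T m) = (m T) ∘ (T t) ∘ (t T)`
    (∀ X : M, T.map (m.app X) ≫ t.app X =
      t.app (T.obj X) ≫ T.map (t.app X) ≫ m.app (T.obj X)) ∧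
    -- axiom 3: `t ∘ (u T) = T u` (unit of `T⁰`)
    (∀ X : M, u.app (T.obj X) ≫ t.app X = T.map (u.app X)) ∧
    -- axiom 4: `t ∘ (T u) = u T` (unit of `T`)
    (∀ X : M, T.map (u.app X) ≫ t.app X = u.app (T.obj X)) := by
  refine ⟨fun X => ?_, ht₂, ht₃, ht₄⟩
  rw [Category.assoc, ht₁ X, T.map_comp]
  simp only [← Category.assoc]
  congr 1
  simpa only [Category.assoc] using hYB X
end

section
/- Let C be a braided monoidal category with braiding c, let (T, m, u) be an algebra in C and σ : T → T an automorphism. Then T' := (T, m ∘ c_{T,T}, u) is again an associative unital algebra in C, and the following are equivalent: (1) σ is a ribbon automorphism, i.e. σ ∘ u = u and σ ∘ m = m ∘ (σ ⊗ σ) ∘ c_{T,T} ∘ c_{T,T}; (2) the natural transformation i, with i_X := σ ⊗ X : T ⊗ X → T ⊗ X, from the monad T_l := T ⊗ (−) to the monad T_l' := T' ⊗ (−), satisfies i ∘ u_{T_l} = u_{T_l'} and i ∘ m_{T_l} = m_{T_l'} ∘ (i T_l') ∘ t ∘ (i T_l), where t is the distributive law from T_l' to T_l given by t_X := a_{T,T,X}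 ∘ (c_{T,T} ⊗ X) ∘ a^{-1}_{T,T,X}. -/
/-!
Statement 10: For an algebra `(T, m, u)` in a braided monoidal category with braiding `c`
and an automorphism `σ : T ≅ T`, the twisted multiplication `m' := m ∘ c_{T,T}` makes
`T' := (T, m', u)` again an associative unital algebra, and `σ` is a ribbon automorphism if
and only if the natural transformation `i_X := σ ⊗ X : T_l ⟶ T_l'` satisfies the
admissibility conditions `i ∘ u_{T_l} = u_{T_l'}` and
`i ∘ m_{T_l} = m_{T_l'} ∘ (i T_l') ∘ t ∘ (i T_l)`, where
`t_X := a_{T,T,X} ∘ (c_{T,T} ⊗ X) ∘ a⁻¹_{T,T,X}`.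
-/

open CategoryTheory MonoidalCategory

universe v u

/-- Whiskering with the unit object is injective. -/
private lemma whiskerRight_unit_cancel {C : Type u} [Category.{v} C] [MonoidalCategory C]
    {A B : C} {f g : A ⟶ B} (h : f ▷ 𝟙_ C = g ▷ 𝟙_ C) : f = g := by
  have h1 : f = (ρ_ A).inv ≫ (f ▷ 𝟙_ C) ≫ (ρ_ B).hom := by simp
  rw [h1, h]; simp

/-- The braid relation in the form needed below. -/
private lemma braid_key {C : Type u} [Category.{v} C] [MonoidalCategory C]
    [BraidedCategory C] (T : C) :
    (β_ T T).hom ▷ T ≫ (β_ (T ⊗ T) T).hom =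
    (α_ T T T).hom ≫ T ◁ (β_ T T).hom ≫ (β_ T (T ⊗ T)).hom ≫ (α_ T T T).hom := by
  simp only [BraidedCategory.braiding_tensor_left_hom, BraidedCategory.braiding_tensor_right_hom,
    Category.assoc]
  rw [← cancel_epi (α_ T T T).inv]
  simpa using BraidedCategory.yang_baxter T T T

theorem ribbon_iff_admissible {C : Type u} [Category.{v} C] [MonoidalCategory C]
    [BraidedCategory C]
    (T : C) (m : T ⊗ T ⟶ T) (u : 𝟙_ C ⟶ T)
    -- `(T, m, u)` is an algebra in `C`
    (h_assoc : (m ▷ T) ≫ m = (α_ T T T).hom ≫ (T ◁ m) ≫ m)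
    (h_one_mul : (u ▷ T) ≫ m = (λ_ T).hom)
    (h_mul_one : (T ◁ u) ≫ m = (ρ_ T).hom)
    -- an automorphism of `T`
    (σ : T ≅ T) :
    -- `T' = (T, m ∘ c_{T,T}, u)` is an associative unital algebra
    ((((β_ T T).hom ≫ m) ▷ T) ≫ ((β_ T T).hom ≫ m) =
      (α_ T T T).hom ≫ (T ◁ ((β_ T T).hom ≫ m)) ≫ ((β_ T T).hom ≫ m)) ∧
    ((u ▷ T) ≫ (β_ T T).hom ≫ m = (λ_ T).hom) ∧
    ((T ◁ u) ≫ (β_ T T).hom ≫ m = (ρ_ T).hom) ∧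
    -- the ribbon conditions for `σ` are equivalent to the admissibility conditions for `i`
    (((u ≫ σ.hom = u) ∧
      (m ≫ σ.hom = (β_ T T).hom ≫ (β_ T T).hom ≫ (σ.hom ⊗ₘ σ.hom) ≫ m))
     ↔
     ((∀ X : C, ((λ_ X).inv ≫ (u ▷ X)) ≫ (σ.hom ▷ X) = (λ_ X).inv ≫ (u ▷ X)) ∧
      (∀ X : C, ((α_ T T X).inv ≫ (m ▷ X)) ≫ (σ.hom ▷ X) =
        (σ.hom ▷ (T ⊗ X)) ≫
          ((α_ T T X).inv ≫ ((β_ T T).hom ▷ X) ≫ (α_ T T X).hom) ≫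
          (σ.hom ▷ (T ⊗ X)) ≫
          ((α_ T T X).inv ≫ (((β_ T T).hom ≫ m) ▷ X))))) := by
  -- the "core" of the right-hand side of the second admissibility condition
  have hcore : (σ.hom ▷ T) ≫ (β_ T T).hom ≫ (σ.hom ▷ T) ≫ (β_ T T).hom ≫ m =
      (β_ T T).hom ≫ (β_ T T).hom ≫ (σ.hom ⊗ₘ σ.hom) ≫ m := by
    rw [BraidedCategory.braiding_naturality_left_assoc, whisker_exchange_assoc,
      ← tensorHom_def_assoc, BraidedCategory.braiding_naturality_assoc]
  -- reformulation of the right-hand side of the second admissibility condition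
  have hRHS : ∀ X : C,
      (σ.hom ▷ (T ⊗ X)) ≫
        ((α_ T T X).inv ≫ ((β_ T T).hom ▷ X) ≫ (α_ T T X).hom) ≫
        (σ.hom ▷ (T ⊗ X)) ≫
        ((α_ T T X).inv ≫ (((β_ T T).hom ≫ m) ▷ X)) =
      (α_ T T X).inv ≫
        (((σ.hom ▷ T) ≫ (β_ T T).hom ≫ (σ.hom ▷ T) ≫ (β_ T T).hom ≫ m) ▷ X) := by
    intro X
    simp only [comp_whiskerRight, Category.assoc, associator_inv_naturality_left_assoc,
      Iso.hom_inv_id_assoc]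
  refine ⟨?_, ?_, ?_, ?_⟩
  · -- associativity of the twisted multiplication
    calc (((β_ T T).hom ≫ m) ▷ T) ≫ ((β_ T T).hom ≫ m)
        = ((β_ T T).hom ▷ T) ≫ (β_ (T ⊗ T) T).hom ≫ (T ◁ m) ≫ m := by
          simp only [comp_whiskerRight, Category.assoc,
            BraidedCategory.braiding_naturality_left_assoc]
      _ = (α_ T T T).hom ≫ (T ◁ (β_ T T).hom) ≫ (β_ T (T ⊗ T)).hom ≫ (α_ T T T).hom ≫
            (T ◁ m) ≫ m := by
          rw [← Category.assoc ((β_ T T).hom ▷ T), braid_key]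
          simp only [Category.assoc]
      _ = (α_ T T T).hom ≫ (T ◁ (β_ T T).hom) ≫ (β_ T (T ⊗ T)).hom ≫ (m ▷ T) ≫ m := by
          rw [h_assoc]
      _ = (α_ T T T).hom ≫ (T ◁ ((β_ T T).hom ≫ m)) ≫ ((β_ T T).hom ≫ m) := by
          simp only [MonoidalCategory.whiskerLeft_comp, Category.assoc,
            BraidedCategory.braiding_naturality_right_assoc]
  · rw [BraidedCategory.braiding_naturality_left_assoc,
      braiding_tensorUnit_left]
    simp [h_mul_one]
  · rw [BraidedCategory.braiding_naturality_right_assoc,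
      braiding_tensorUnit_right]
    simp [h_one_mul]
  · constructor
    · rintro ⟨h1, h2⟩
      refine ⟨fun X => ?_, fun X => ?_⟩
      · rw [Category.assoc, ← comp_whiskerRight, h1]
      · rw [hRHS, hcore, Category.assoc, ← comp_whiskerRight, h2]
    · rintro ⟨ha, hb⟩
      constructor
      · have := ha (𝟙_ C)
        rw [Category.assoc, ← comp_whiskerRight] at this
        have := (cancel_epi (λ_ (𝟙_ C)).inv).mp this
        exact whiskerRight_unit_cancel this
      · have := hb (𝟙_ C)
        rw [hRHS, hcore, Category.assoc, ← comp_whiskerRight] at this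
        have := (cancel_epi (α_ T T (𝟙_ C)).inv).mp this
        rw [whiskerRight_unit_cancel this]
end

section
/- Let (T, Δ, ε) be a comonad on a category M and let t : T T → T T be a dual distributive law of the comonad T with itself which satisfies the Yang–Baxter relation (t T) ∘ (T t) ∘ (t T) = (T t) ∘ (t T) ∘ (T t) and the relation t ∘ t ∘ Δ = Δ. Then T^0 := (T, t ∘ Δ, ε) is again a comonad on M, and t, regarded as a natural transformation T^0 T → T T^0, satisfies the axioms of a dual distributive law between the comonads T^0 and T. -/
open CategoryTheory

universe v u

theorem deformed_comonad_and_dual_distributive_law {M : Type u} [Category.{v} M]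
    (T : M ⥤ M) (d : T ⟶ T ⋙ T) (e : T ⟶ 𝟭 M)
    -- `(T, d, e)` is a comonad
    (hd : ∀ X : M, d.app X ≫ T.map (d.app X) = d.app X ≫ d.app (T.obj X))
    (he₁ : ∀ X : M, d.app X ≫ e.app (T.obj X) = 𝟙 (T.obj X))
    (he₂ : ∀ X : M, d.app X ≫ T.map (e.app X) = 𝟙 (T.obj X))
    -- `t` is a dual distributive law of the comonad `T` with itself
    (t : T ⋙ T ⟶ T ⋙ T)
    (ht₁ : ∀ X : M, t.app X ≫ d.app (T.obj X) =
      T.map (d.app X) ≫ t.app (T.obj X) ≫ T.map (t.app X))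
    (ht₂ : ∀ X : M, t.app X ≫ T.map (d.app X) =
      d.app (T.obj X) ≫ T.map (t.app X) ≫ t.app (T.obj X))
    (ht₃ : ∀ X : M, t.app X ≫ e.app (T.obj X) = T.map (e.app X))
    (ht₄ : ∀ X : M, t.app X ≫ T.map (e.app X) = e.app (T.obj X))
    -- the Yang–Baxter relation `(tT) ∘ (Tt) ∘ (tT) = (Tt) ∘ (tT) ∘ (Tt)`
    (hYB : ∀ X : M, t.app (T.obj X) ≫ T.map (t.app X) ≫ t.app (T.obj X) =
      T.map (t.app X) ≫ t.app (T.obj X) ≫ T.map (t.app X))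
    -- the relation `t ∘ t ∘ Δ = Δ`
    (httd : ∀ X : M, d.app X ≫ t.app X ≫ t.app X = d.app X) :
    -- `T⁰ = (T, t ∘ Δ, ε)` is a comonad: coassociativity of `t ∘ Δ`
    (∀ X : M, (d.app X ≫ t.app X) ≫ T.map (d.app X ≫ t.app X) =
      (d.app X ≫ t.app X) ≫ (d.app (T.obj X) ≫ t.app (T.obj X))) ∧
    -- counitality of `t ∘ Δ` with respect to `ε`
    (∀ X : M, (d.app X ≫ t.app X) ≫ e.app (T.obj X) = 𝟙 (T.obj X)) ∧
    (∀ X : M, (d.app X ≫ t.app X) ≫ T.map (e.app X) = 𝟙 (T.obj X)) ∧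
    -- `t` is a dual distributive law `T⁰ T ⟶ T T⁰`:
    -- axiom 1 (comultiplication of `T_r = T`)
    (∀ X : M, t.app X ≫ d.app (T.obj X) =
      T.map (d.app X) ≫ t.app (T.obj X) ≫ T.map (t.app X)) ∧
    -- axiom 2 (comultiplication of `T_l = T⁰`)
    (∀ X : M, t.app X ≫ T.map (d.app X ≫ t.app X) =
      (d.app (T.obj X) ≫ t.app (T.obj X)) ≫ T.map (t.app X) ≫ t.app (T.obj X)) ∧
    -- axiom 3 (counit of `T_r = T`)
    (∀ X : M, t.app X ≫ e.app (T.obj X) = T.map (e.app X)) ∧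
    -- axiom 4 (counit of `T_l = T⁰`)
    (∀ X : M, t.app X ≫ T.map (e.app X) = e.app (T.obj X)) := by
  refine ⟨?_, ?_, ?_, ht₁, ?_, ht₃, ht₄⟩
  · intro X
    simp only [Functor.map_comp, Category.assoc]
    slice_lhs 2 3 => rw [ht₂ X]
    slice_lhs 3 5 => rw [← hYB X]
    slice_lhs 1 2 => rw [← hd X]
    slice_rhs 2 3 => rw [ht₁ X]
    simp only [Category.assoc]
  · intro X
    rw [Category.assoc, ht₃, he₂]
  · intro X
    rw [Category.assoc, ht₄, he₁]
  · intro X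
    simp only [Functor.map_comp, Category.assoc]
    slice_lhs 1 2 => rw [ht₂ X]
    slice_lhs 2 4 => rw [← hYB X]
end
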